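/- arXiv:2011.00248 — 4 statements merged into one kernel-verified Lean document; each statement's English description precedes it below -/
import Mathlib

section
/- Let (B, ∘, ∗) be a biquandle and let f : B → B be a biquandle automorphism. Define the twisted operations on B by x ∘_f y = f⁻¹(x) ∘ f⁻¹(y) and x ∗_f y = f⁻¹(x) ∗ f⁻¹(y). Then (B, ∘_f, ∗_f) is again a biquandle, i.e. it satisfies all four biquandle axioms: (1) x ∘_f x = x ∗_f x for all x; (2) for each y the maps x ↦ x ∘_f y and x ↦ x ∗_f y are bijections of B; (3) the map S_f : B × B → B × B, (x,y) ↦ (x ∘_f y, y ∗_f x), is a bijection; (4) for all x, y, z: (x ∘_f z) ∘_f (y ∘_f z) = (x ∘_f y) ∘_f (z ∗_f y), (x ∘_f z) ∗_f (y ∘_f z) = (x ∗_f y) ∘_f (z ∗_f y), and (x ∗_f z) ∗_f (y ∗_f z) = (x ∗_f y) ∗_f (z ∘_f y). -/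
/-- The twisted operation `x ∘_f y = f⁻¹(x) ∘ f⁻¹(y)` on a set with a binary
operation and a bijection `f`. -/
def twistedOp {B : Type*} (op : B → B → B) (f : B ≃ B) : B → B → B :=
  fun x y => op (f.symm x) (f.symm y)

/-- If `(B, ∘, ∗)` is a biquandle and `f` is a biquandle automorphism of `B`,
then the twisted operations `∘_f`, `∗_f` make `B` a biquandle. -/
theorem twisted_biquandle {B : Type*} (op st : B → B → B) (f : B ≃ B)
    (h1 : ∀ x, op x x = st x x)
    (h2 : ∀ y, Function.Bijective (fun x => op x y) ∧ Function.Bijective (fun x => st x y))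
    (h3 : Function.Bijective (fun p : B × B => (op p.1 p.2, st p.2 p.1)))
    (h4 : ∀ x y z, op (op x z) (op y z) = op (op x y) (st z y) ∧
      st (op x z) (op y z) = op (st x y) (st z y) ∧
      st (st x z) (st y z) = st (st x y) (op z y))
    (hfop : ∀ x y, f (op x y) = op (f x) (f y))
    (hfst : ∀ x y, f (st x y) = st (f x) (f y)) :
    (∀ x, twistedOp op f x x = twistedOp st f x x) ∧
    (∀ y, Function.Bijective (fun x => twistedOp op f x y) ∧
      Function.Bijective (fun x => twistedOp st f x y)) ∧
    Function.Bijective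
      (fun p : B × B => (twistedOp op f p.1 p.2, twistedOp st f p.2 p.1)) ∧
    (∀ x y z,
      twistedOp op f (twistedOp op f x z) (twistedOp op f y z) =
        twistedOp op f (twistedOp op f x y) (twistedOp st f z y) ∧
      twistedOp st f (twistedOp op f x z) (twistedOp op f y z) =
        twistedOp op f (twistedOp st f x y) (twistedOp st f z y) ∧
      twistedOp st f (twistedOp st f x z) (twistedOp st f y z) =
        twistedOp st f (twistedOp st f x y) (twistedOp op f z y)) := by
  have hgop : ∀ x y, f.symm (op x y) = op (f.symm x) (f.symm y) := by
    intro x y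
    apply f.injective
    rw [hfop, f.apply_symm_apply, f.apply_symm_apply, f.apply_symm_apply]
  have hgst : ∀ x y, f.symm (st x y) = st (f.symm x) (f.symm y) := by
    intro x y
    apply f.injective
    rw [hfst, f.apply_symm_apply, f.apply_symm_apply, f.apply_symm_apply]
  refine ⟨fun x => h1 _ , fun y => ?_, ?_, fun x y z => ?_⟩
  · constructor
    · have : (fun x => twistedOp op f x y) = (fun x => op x (f.symm y)) ∘ f.symm := rfl
      rw [this]
      exact ((h2 (f.symm y)).1).comp f.symm.bijective
    · have : (fun x => twistedOp st f x y) = (fun x => st x (f.symm y)) ∘ f.symm := rfl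
      rw [this]
      exact ((h2 (f.symm y)).2).comp f.symm.bijective
  · have : (fun p : B × B => (twistedOp op f p.1 p.2, twistedOp st f p.2 p.1)) =
      (fun p : B × B => (op p.1 p.2, st p.2 p.1)) ∘ (Prod.map f.symm f.symm) := rfl
    rw [this]
    exact h3.comp (f.symm.bijective.prodMap f.symm.bijective)
  · simp only [twistedOp, hgop, hgst]
    exact h4 _ _ _
end

section
/- Let R be a commutative ring, let s and t be units of R, and let M be an R-module. Define binary operations on M by x ∘ y = s⁻¹t·x + s⁻¹(1 − t)·y and x ∗ y = s⁻¹·x. Then (M, ∘, ∗) is a biquandle: (1) x ∘ x = x ∗ x for all x ∈ M; (2) for each y ∈ M the maps x ↦ x ∘ y and x ↦ x ∗ y are bijections of M; (3) the map S : M × M → M × M, (x,y) ↦ (x ∘ y, y ∗ x), is a bijection; (4) for all x, y, z ∈ M: (x ∘ z) ∘ (y ∘ z) = (x ∘ y) ∘ (z ∗ y), (x ∘ z) ∗ (y ∘ z) = (x ∗ y) ∘ (z ∗ y), and (x ∗ z) ∗ (y ∗ z) = (x ∗ y) ∗ (z ∘ y). -/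
/-- The Alexander biquandle operation `x ∘ y = s⁻¹t·x + s⁻¹(1 − t)·y` on a
module `M` over a commutative ring `R` with units `s`, `t`. -/
def alexOp {R : Type*} [CommRing R] (s t : Rˣ) {M : Type*} [AddCommGroup M]
    [Module R M] : M → M → M :=
  fun x y => ((s⁻¹ * t : Rˣ) : R) • x + (((s⁻¹ : Rˣ) : R) * (1 - (t : R))) • y

/-- The Alexander biquandle operation `x ∗ y = s⁻¹·x`. -/
def alexSt {R : Type*} [CommRing R] (s : Rˣ) {M : Type*} [AddCommGroup M]
    [Module R M] : M → M → M :=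
  fun x _ => ((s⁻¹ : Rˣ) : R) • x

lemma unit_smul_bijective {R : Type*} [CommRing R] (u : Rˣ) {M : Type*}
    [AddCommGroup M] [Module R M] :
    Function.Bijective (fun x : M => (u : R) • x) := by
  refine Function.bijective_iff_has_inverse.2 ⟨fun x => ((u⁻¹ : Rˣ) : R) • x, ?_, ?_⟩ <;>
    intro x <;> simp [smul_smul]

/-- The Alexander biquandle operations make any module over a commutative ring
with distinguished units `s`, `t` into a biquandle. -/
theorem alexander_biquandle {R : Type*} [CommRing R] (s t : Rˣ) (M : Type*)
    [AddCommGroup M] [Module R M] :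
    (∀ x : M, alexOp s t x x = alexSt s x x) ∧
    (∀ y : M, Function.Bijective (fun x => alexOp s t x y) ∧
      Function.Bijective (fun x => alexSt s x y)) ∧
    Function.Bijective
      (fun p : M × M => (alexOp s t p.1 p.2, alexSt s p.2 p.1)) ∧
    (∀ x y z : M,
      alexOp s t (alexOp s t x z) (alexOp s t y z) =
        alexOp s t (alexOp s t x y) (alexSt s z y) ∧
      alexSt s (alexOp s t x z) (alexOp s t y z) =
        alexOp s t (alexSt s x y) (alexSt s z y) ∧
      alexSt s (alexSt s x z) (alexSt s y z) =
        alexSt s (alexSt s x y) (alexOp s t z y)) := by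
  have key : ((s⁻¹ * t : Rˣ) : R) + ((s⁻¹ : Rˣ) : R) * (1 - (t : R)) = ((s⁻¹ : Rˣ) : R) := by
    push_cast; ring
  refine ⟨?_, ?_, ?_, ?_⟩
  · intro x
    rw [alexOp, alexSt, ← add_smul, key]
  · intro y
    constructor
    · refine Function.bijective_iff_has_inverse.2
        ⟨fun x => (((s⁻¹ * t)⁻¹ : Rˣ) : R) •
          (x - (((s⁻¹ : Rˣ) : R) * (1 - (t : R))) • y), ?_, ?_⟩ <;> intro x <;>
        simp only [alexOp]
      · rw [add_sub_cancel_right, smul_smul, ← Units.val_mul, inv_mul_cancel, Units.val_one,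
          one_smul]
      · rw [smul_smul, ← Units.val_mul, mul_inv_cancel, Units.val_one, one_smul,
          sub_add_cancel]
    · simpa [alexSt] using unit_smul_bijective (s⁻¹) (M := M)
  · refine Function.bijective_iff_has_inverse.2
      ⟨fun p : M × M => ((((s⁻¹ * t)⁻¹ : Rˣ) : R) •
        (p.1 - (((s⁻¹ : Rˣ) : R) * (1 - (t : R))) • ((s : R) • p.2)), (s : R) • p.2),
        ?_, ?_⟩ <;> rintro ⟨x, y⟩ <;>
      simp only [alexOp, alexSt, Prod.mk.injEq]
    · have hy : (s : R) • (((s⁻¹ : Rˣ) : R) • y) = y := by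
        rw [smul_smul, ← Units.val_mul, mul_inv_cancel, Units.val_one, one_smul]
      refine ⟨?_, hy⟩
      rw [hy, add_sub_cancel_right, smul_smul, ← Units.val_mul, inv_mul_cancel,
        Units.val_one, one_smul]
    · rw [smul_smul, ← Units.val_mul, mul_inv_cancel, Units.val_one, one_smul,
        sub_add_cancel]
      exact ⟨rfl, by rw [smul_smul, ← Units.val_mul, inv_mul_cancel, Units.val_one, one_smul]⟩
  · intro x y z
    simp only [alexOp, alexSt, smul_add, smul_smul, smul_sub]
    refine ⟨?_, ?_, ?_⟩
    · rw [show (((s⁻¹ : Rˣ) : R) * (1 - (t : R))) * ((s⁻¹ * t : Rˣ) : R) =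
        ((s⁻¹ * t : Rˣ) : R) * (((s⁻¹ : Rˣ) : R) * (1 - (t : R))) from mul_comm _ _]
      have h2 : (((s⁻¹ * t : Rˣ) : R) * (((s⁻¹ : Rˣ) : R) * (1 - (t : R)))) • z +
          ((((s⁻¹ : Rˣ) : R) * (1 - (t : R))) * (((s⁻¹ : Rˣ) : R) * (1 - (t : R)))) • z =
          ((((s⁻¹ : Rˣ) : R) * (1 - (t : R))) * ((s⁻¹ : Rˣ) : R)) • z := by
        rw [← add_smul]
        congr 1
        rw [← mul_comm (((s⁻¹ : Rˣ) : R) * (1 - (t : R))), ← mul_add, key,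
          mul_comm]
      abel_nf
      abel_nf at h2
      linear_combination (norm := abel) h2
    · module
    · trivial
end

section
/- Let R be a commutative ring, let s and t be units of R, and let M be an R-module. Equip M with the virtual Alexander quandle operations x ∘ y = t·x + (1 − t)·y and x ∗ y = x, and the automorphism f(x) = s·x. Then the twisted operations x ∘_f y = f⁻¹(x) ∘ f⁻¹(y) and x ∗_f y = f⁻¹(x) ∗ f⁻¹(y) coincide with the Alexander biquandle operations: for all x, y ∈ M, x ∘_f y = s⁻¹t·x + s⁻¹(1 − t)·y and x ∗_f y = s⁻¹·x. -/
/-- The virtual Alexander quandle operation `x ∘ y = t·x + (1 − t)·y`. -/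
def valexOp {R : Type*} [CommRing R] (t : Rˣ) {M : Type*} [AddCommGroup M]
    [Module R M] : M → M → M :=
  fun x y => (t : R) • x + (1 - (t : R)) • y

/-- The virtual Alexander quandle operation `x ∗ y = x`. -/
def valexSt {M : Type*} : M → M → M := fun x _ => x

/-- The bijection `f(x) = s·x` of a module `M`, with inverse `x ↦ s⁻¹·x`. -/
def smulUnitEquiv {R : Type*} [CommRing R] (s : Rˣ) {M : Type*} [AddCommGroup M]
    [Module R M] : M ≃ M where
  toFun x := (s : R) • x
  invFun x := ((s⁻¹ : Rˣ) : R) • x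
  left_inv x := by
    show ((s⁻¹ : Rˣ) : R) • (s : R) • x = x
    rw [smul_smul, Units.inv_mul, one_smul]
  right_inv x := by
    show (s : R) • ((s⁻¹ : Rˣ) : R) • x = x
    rw [smul_smul, Units.mul_inv, one_smul]

/-- Twisting the virtual Alexander quandle operations by the automorphism
`f(x) = s·x` yields exactly the Alexander biquandle operations
`x ∘_f y = s⁻¹t·x + s⁻¹(1 − t)·y` and `x ∗_f y = s⁻¹·x`. -/
theorem twisted_virtual_alexander_eq_alexander_biquandle {R : Type*} [CommRing R]
    (s t : Rˣ) (M : Type*) [AddCommGroup M] [Module R M] :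
    ∀ x y : M,
      twistedOp (valexOp t) (smulUnitEquiv s) x y =
        ((s⁻¹ * t : Rˣ) : R) • x + (((s⁻¹ : Rˣ) : R) * (1 - (t : R))) • y ∧
      twistedOp valexSt (smulUnitEquiv s) x y = ((s⁻¹ : Rˣ) : R) • x := by
  intro x y
  constructor
  · show (t : R) • (((s⁻¹ : Rˣ) : R) • x) + (1 - (t : R)) • (((s⁻¹ : Rˣ) : R) • y) = _
    rw [smul_smul, smul_smul, Units.val_mul]
    ring_nf
  · rfl
end

section
/- Let m and n be natural numbers with m ≥ 1, and let a, b : Fin n → ZMod m. Consider the graph G whose vertex set is ZMod m, whose edge set is E = ZMod m ⊕ Fin n, where the core edge indexed by i ∈ ZMod m runs from vertex i to vertex i + 1 and the chord edge indexed by j ∈ Fin n runs from vertex a(j) to vertex b(j). For g : ZMod m → Z define the coboundary δg : E → Z by (δg)(core edge i) = g(i + 1) − g(i) and (δg)(chord edge j) = g(b(j)) − g(a(j)). Suppose α : E → Z is a 1-cochain whose values on the core edges sum to zero: Σ_{i ∈ ZMod m} α(core edge i) = 0. Then there exists a unique 1-cochain β : E → Z such that β vanishes on every core edge and β is cohomologous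 to α, i.e. β = α + δg for some g : ZMod m → Z. -/
/-- The coboundary of a 0-cochain `g` on the Gauss-diagram graph with core
edges indexed by `ZMod m` (edge `i` from vertex `i` to vertex `i + 1`) and
chord edges indexed by `Fin n` (edge `j` from vertex `a j` to vertex `b j`). -/
def gaussCoboundary (m n : ℕ) (a b : Fin n → ZMod m) (g : ZMod m → ℤ) :
    ZMod m ⊕ Fin n → ℤ :=
  Sum.elim (fun i => g (i + 1) - g i) (fun j => g (b j) - g (a j))

lemma zmod_sum_range (m : ℕ) [NeZero m] (f : ZMod m → ℤ) :
    ∑ i : ZMod m, f i = ∑ k ∈ Finset.range m, f (k : ZMod m) :=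
  Finset.sum_nbij' (i := fun i : ZMod m => i.val) (j := fun k : ℕ => (k : ZMod m))
    (fun i _ => Finset.mem_range.mpr (ZMod.val_lt i))
    (fun k _ => Finset.mem_univ _)
    (fun i _ => by simp)
    (fun k hk => ZMod.val_cast_of_lt (Finset.mem_range.mp hk))
    (fun i _ => by simp)

lemma zmod_const_of_step (m : ℕ) [NeZero m] (h : ZMod m → ℤ)
    (hs : ∀ i : ZMod m, h (i + 1) = h i) (x : ZMod m) : h x = h 0 := by
  have key : ∀ k : ℕ, h (k : ZMod m) = h 0 := by
    intro k
    induction k with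
    | zero => simp
    | succ k ih => rw [Nat.cast_succ, hs, ih]
  have : ((x.val : ℕ) : ZMod m) = x := by simp
  rw [← this, key]

/-- If a 1-cochain `α` on the Gauss-diagram graph has values summing to zero
on the core edges, then there is a unique 1-cochain `β` cohomologous to `α`
that vanishes on every core edge. -/
theorem chord_index_cocycle_exists_unique (m n : ℕ) [NeZero m]
    (a b : Fin n → ZMod m) (α : ZMod m ⊕ Fin n → ℤ)
    (hα : ∑ i : ZMod m, α (Sum.inl i) = 0) :
    ∃! β : ZMod m ⊕ Fin n → ℤ,
      (∀ i : ZMod m, β (Sum.inl i) = 0) ∧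
      ∃ g : ZMod m → ℤ, ∀ e, β e = α e + gaussCoboundary m n a b g e := by
  set g : ZMod m → ℤ := fun i => -∑ k ∈ Finset.range i.val, α (Sum.inl (k : ZMod m)) with hg
  have hval : ∀ i : ZMod m, (((i.val + 1 : ℕ)) : ZMod m) = i + 1 := by
    intro i; push_cast; simp
  have hrange : ∑ k ∈ Finset.range m, α (Sum.inl (k : ZMod m)) = 0 := by
    exact (zmod_sum_range m (fun i => α (Sum.inl i))).symm.trans hα
  have key : ∀ i : ZMod m, α (Sum.inl i) + (g (i + 1) - g i) = 0 := by
    intro i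
    rcases lt_or_eq_of_le (Nat.succ_le_of_lt (ZMod.val_lt i)) with h | h
    · have hv : (i + 1).val = i.val + 1 := by
        rw [← hval i, ZMod.val_cast_of_lt h]
      simp only [hg, hv, Finset.sum_range_succ]
      simp
    · have h0 : i + 1 = 0 := by
        rw [← hval i, show i.val + 1 = m from h, ZMod.natCast_self]
      have : ∑ k ∈ Finset.range (i.val + 1), α (Sum.inl (k : ZMod m)) = 0 := by
        rw [show i.val + 1 = m from h]; exact hrange
      rw [Finset.sum_range_succ] at this
      simp only [hg, h0, ZMod.val_zero, Finset.sum_range_zero]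
      simp only [ZMod.natCast_val, ZMod.cast_id] at this
      linarith
  refine ⟨Sum.elim (fun _ => 0) (fun j => α (Sum.inr j) + (g (b j) - g (a j))),
    ⟨fun i => rfl, g, fun e => ?_⟩, ?_⟩
  · cases e with
    | inl i => simpa [gaussCoboundary] using (key i).symm
    | inr j => rfl
  · rintro β' ⟨h0, g', hg'⟩
    have step : ∀ i : ZMod m, (g' - g) (i + 1) = (g' - g) i := by
      intro i
      have h1 := hg' (Sum.inl i)
      rw [h0 i] at h1
      simp only [gaussCoboundary, Sum.elim_inl] at h1
      have h2 := key i
      simp only [Pi.sub_apply]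
      linarith
    have hconst := zmod_const_of_step m (g' - g) step
    funext e
    cases e with
    | inl i => simpa using h0 i
    | inr j =>
      have ha' := hconst (a j)
      have hb' := hconst (b j)
      simp only [Pi.sub_apply] at ha' hb'
      rw [hg' (Sum.inr j)]
      simp only [gaussCoboundary, Sum.elim_inr]
      linarith
end
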